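/- arXiv:1505.02478 — 5 statements merged into one kernel-verified Lean document; each statement's English description precedes it below -/
import Mathlib

section
/- There is no Borel measurable positivity set in the Cantor space X = {-2,-1,0,1,2}^ℕ, where a positivity set S ⊆ X satisfies: (i) if x + y = z (coordinatewise, with the sum landing in X) and x, y ∈ S then z ∈ S; (ii) if x + y = z and x, y ∉ S then z ∉ S; (iii) if x ∈ X is eventually zero and has a nonzero term, then x ∈ S if and only if the last nonzero term of x is positive. -/
/-!
For a `{±1}`-sequence `x`, let `x'` be `x` with all signs after position `N` flipped. Then
`x + x'` is `2x` up to `N` and zero afterwards, so by (iii) it lies in `S` exactly when `x N = 1`.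
Flipping is a homeomorphism of `{±1}^ℕ ≅ {0,1}^ℕ` fixing the cylinders of length `N + 1`. If `S`
were Borel, its trace `A` on `{±1}^ℕ` would differ from an open set `U` by a meagre set, so by
Baire category some cylinder contains `x` with both `x, x'` in the complement of `A` (if
`U = ∅`) or both in `A` (if not), while `x N` can be prescribed. Taking `x N = 1` in the first
case contradicts (ii), taking `x N = -1` in the second contradicts (i).
-/

/-- `x` takes values in `{-2,-1,0,1,2}`. -/
def inX (x : ℕ → ℤ) : Prop := ∀ n, x n = -2 ∨ x n = -1 ∨ x n = 0 ∨ x n = 1 ∨ x n = 2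

/-- `x` is eventually zero. -/
def EventuallyZeroSeq (x : ℕ → ℤ) : Prop := ∃ N, ∀ n, N < n → x n = 0

/-- the last nonzero term of `x` is positive. -/
def LastNonzeroPos (x : ℕ → ℤ) : Prop := ∃ n, 0 < x n ∧ ∀ m, n < m → x m = 0

/-- A positivity set in the Cantor space `{-2,-1,0,1,2}^ℕ`. -/
def IsPositivitySet (S : Set (ℕ → ℤ)) : Prop :=
  S ⊆ {x | inX x} ∧
  (∀ x y, inX x → inX y → inX (x + y) → x ∈ S → y ∈ S → x + y ∈ S) ∧
  (∀ x y, inX x → inX y → inX (x + y) → x ∉ S → y ∉ S → x + y ∉ S) ∧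
  (∀ x, inX x → (∃ n, x n ≠ 0) → EventuallyZeroSeq x → (x ∈ S ↔ LastNonzeroPos x))

open Set Topology PiNat

theorem isMeagre_diff_of_residualEq {X : Type*} [TopologicalSpace X] {s t : Set X}
    (h : s =ᵇ t) : IsMeagre (t \ s) := by
  filter_upwards [Filter.eventuallyEq_set.mp h] with x hx
  simp [hx]

theorem exists_mem_and_apply_mem_of_isMeagre_diff {X : Type*} [TopologicalSpace X]
    [BaireSpace X] (f : X ≃ₜ X) {V T : Set X} (hV : IsOpen V) (hVne : V.Nonempty)
    (hfV : MapsTo f V V) (hT : IsMeagre (V \ T)) : ∃ x ∈ V, x ∈ T ∧ f x ∈ T := by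
  have hbad : IsMeagre (V \ T ∪ f ⁻¹' (V \ T)) :=
    hT.union (hT.preimage_of_isOpenMap f.continuous f.isOpenMap)
  obtain ⟨x, hxV, hx⟩ := (dense_of_mem_residual hbad).inter_open_nonempty V hV hVne
  simp only [mem_compl_iff, mem_union, mem_sdiff, mem_preimage, not_or, not_and, not_not] at hx
  exact ⟨x, hxV, hx.1 hxV, hx.2 (hfV hxV)⟩

theorem exists_cylinder_subset_of_apply_eq {E : Type*} [TopologicalSpace E] [DiscreteTopology E]
    {U : Set (ℕ → E)} (hU : IsOpen U) (hUne : U.Nonempty) (e : E) :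
    ∃ (c : ℕ → E) (N : ℕ), cylinder c (N + 1) ⊆ U ∧ c N = e := by
  obtain ⟨x, hx⟩ := hUne
  obtain ⟨_, ⟨c, N, rfl⟩, -, hcU⟩ :=
    (isTopologicalBasis_cylinders fun _ => E).exists_subset_of_mem_open hx hU
  refine ⟨Function.update c N e, N, fun y hy => hcU fun i hi => ?_, Function.update_self ..⟩
  rw [hy i (by omega), Function.update_of_ne hi.ne]

def flipAfter (N : ℕ) : (ℕ → Bool) ≃ₜ (ℕ → Bool) :=
  Homeomorph.piCongrRight fun n =>
    if n ≤ N then Homeomorph.refl Bool else Equiv.boolNot.toHomeomorphOfDiscrete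

theorem flipAfter_apply (N : ℕ) (b : ℕ → Bool) (n : ℕ) :
    flipAfter N b n = if n ≤ N then b n else !b n := by
  by_cases h : n ≤ N <;> simp [flipAfter, Equiv.toHomeomorphOfDiscrete, h]

theorem exists_apply_eq_and_flipAfter_mem {U T : Set (ℕ → Bool)} (hU : IsOpen U)
    (hUne : U.Nonempty) (hT : IsMeagre (U \ T)) (β : Bool) :
    ∃ N b, b N = β ∧ b ∈ T ∧ flipAfter N b ∈ T := by
  obtain ⟨c, N, hcU, hcN⟩ := exists_cylinder_subset_of_apply_eq hU hUne β
  have hflip : MapsTo (flipAfter N) (cylinder c (N + 1)) (cylinder c (N + 1)) :=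
    fun b hb i hi => by rw [flipAfter_apply, if_pos (by omega), hb i hi]
  obtain ⟨b, hbc, hb, hfb⟩ := exists_mem_and_apply_mem_of_isMeagre_diff (flipAfter N)
    (isOpen_cylinder _ c _) ⟨c, self_mem_cylinder c _⟩ hflip (hT.mono (sdiff_subset_sdiff_left hcU))
  exact ⟨N, b, (hbc N (by omega)).trans hcN, hb, hfb⟩

def signSeq (b : ℕ → Bool) : ℕ → ℤ := fun n => if b n then 1 else -1

theorem continuous_signSeq : Continuous signSeq :=
  continuous_pi fun n =>
    (continuous_of_discreteTopology (f := fun v : Bool => if v then (1 : ℤ) else -1)).comp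
      (continuous_apply n)

theorem inX_signSeq (b : ℕ → Bool) : inX (signSeq b) := by
  intro n
  unfold signSeq
  split_ifs <;> simp

theorem signSeq_add_signSeq_flipAfter_apply (N : ℕ) (b : ℕ → Bool) (n : ℕ) :
    (signSeq b + signSeq (flipAfter N b)) n = if n ≤ N then 2 * signSeq b n else 0 := by
  simp only [Pi.add_apply, signSeq, flipAfter_apply]
  split_ifs <;> cases b n <;> simp_all

theorem inX_signSeq_add_signSeq_flipAfter (N : ℕ) (b : ℕ → Bool) :
    inX (signSeq b + signSeq (flipAfter N b)) := fun n => by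
  rw [signSeq_add_signSeq_flipAfter_apply]
  unfold signSeq
  split_ifs <;> simp

theorem lastNonzeroPos_iff_of_forall_lt {x : ℕ → ℤ} {N : ℕ} (hx : ∀ n, N < n → x n = 0)
    (hN : x N ≠ 0) : LastNonzeroPos x ↔ 0 < x N := by
  refine ⟨fun ⟨n, hn, hlast⟩ => ?_, fun h => ⟨N, h, hx⟩⟩
  rcases lt_trichotomy n N with h | rfl | h
  · exact absurd (hlast N h) hN
  · exact hn
  · exact absurd (hx n h) hn.ne'

theorem IsPositivitySet.signSeq_add_signSeq_flipAfter_mem_iff {S : Set (ℕ → ℤ)}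
    (hS : IsPositivitySet S) (N : ℕ) (b : ℕ → Bool) :
    signSeq b + signSeq (flipAfter N b) ∈ S ↔ b N = true := by
  have hzero : ∀ n, N < n → (signSeq b + signSeq (flipAfter N b)) n = 0 := fun n hn => by
    rw [signSeq_add_signSeq_flipAfter_apply, if_neg (by omega)]
  have hzN : (signSeq b + signSeq (flipAfter N b)) N = if b N then 2 else -2 := by
    rw [signSeq_add_signSeq_flipAfter_apply, if_pos le_rfl, signSeq]
    split_ifs <;> rfl
  have hne : (signSeq b + signSeq (flipAfter N b)) N ≠ 0 := by
    rw [hzN]; split_ifs <;> decide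
  rw [hS.2.2.2 _ (inX_signSeq_add_signSeq_flipAfter N b) ⟨N, hne⟩ ⟨N, hzero⟩,
    lastNonzeroPos_iff_of_forall_lt hzero hne, hzN]
  cases b N <;> decide

/-- There is no Borel measurable positivity set in `{-2,-1,0,1,2}^ℕ`
(with the Borel σ-algebra of the product topology on `ℕ → ℤ`). -/
theorem no_borel_positivity_set (S : Set (ℕ → ℤ)) (hS : IsPositivitySet S) :
    ¬ @MeasurableSet (ℕ → ℤ) (borel (ℕ → ℤ)) S := by
  rw [← BorelSpace.measurable_eq (α := ℕ → ℤ)]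
  intro hSmeas
  have hsum := hS.signSeq_add_signSeq_flipAfter_mem_iff
  obtain ⟨-, hadd, hadd_compl, -⟩ := hS
  obtain ⟨U, hUo, hAU⟩ := (hSmeas.preimage continuous_signSeq.measurable).residualEq_isOpen
  rcases U.eq_empty_or_nonempty with rfl | hUne
  · have hA : IsMeagre (univ \ (signSeq ⁻¹' S)ᶜ) := by
      simpa using isMeagre_diff_of_residualEq hAU.symm
    obtain ⟨N, b, hbN, hb, hfb⟩ :=
      exists_apply_eq_and_flipAfter_mem isOpen_univ univ_nonempty hA true
    exact hadd_compl _ _ (inX_signSeq b) (inX_signSeq _)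
      (inX_signSeq_add_signSeq_flipAfter N b) hb hfb ((hsum N b).2 hbN)
  · obtain ⟨N, b, hbN, hb, hfb⟩ :=
      exists_apply_eq_and_flipAfter_mem hUo hUne (isMeagre_diff_of_residualEq hAU) false
    simpa [hbN] using (hsum N b).1 (hadd _ _ (inX_signSeq b) (inX_signSeq _)
      (inX_signSeq_add_signSeq_flipAfter N b) hb hfb)
end

section
/- If S ⊆ {-2,-1,0,1,2}^ℕ is a positivity set, then the set S' = S ∩ {-1,0,1}^ℕ does not have the Baire property in the Cantor space {-1,0,1}^ℕ. -/
/-- The Cantor space `{-1,0,1}^ℕ`, as a subspace of the product space `ℕ → ℤ`. -/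
def Y : Type := {x : ℕ → ℤ // ∀ n, x n = -1 ∨ x n = 0 ∨ x n = 1}

instance : TopologicalSpace Y := instTopologicalSpaceSubtype

/-!
Write `A = {y ∈ Y | y ∈ S}` and let `φ` negate every coordinate of index `≥ n + 1`. For `y` in
the cylinder `C` of points whose first `n + 1` coordinates are `c₀, …, cₙ`, the sum `y + φ y` is the
same finitely supported sequence `(2c₀, …, 2cₙ, 0, …)` for all `y`, and `φ` maps `C` onto itself.
If `cₙ = 1` this sum lies in `S`, so by axiom (ii) `φ` sends `C \ A` into `C ∩ A`; since `C` is not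
meagre, `C ∩ A` is not meagre. If `cₙ = -1` the sum lies outside `S`, and axiom (i) shows in the
same way that `C \ A` is not meagre. Every nonempty open set contains cylinders of both kinds, so
neither `A` nor its complement is meagre in any nonempty open set, which is incompatible with the
Baire property.
-/

open Set PiNat

namespace IsPositivitySet

variable {S : Set (ℕ → ℤ)}

lemma mem_of_lastNonzero_pos (hS : IsPositivitySet S) {z : ℕ → ℤ} (hz : inX z) {n : ℕ}
    (hn : 0 < z n) (hzero : ∀ m, n < m → z m = 0) : z ∈ S :=
  (hS.2.2.2 z hz ⟨n, hn.ne'⟩ ⟨n, hzero⟩).mpr ⟨n, hn, hzero⟩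

lemma notMem_of_lastNonzero_neg (hS : IsPositivitySet S) {z : ℕ → ℤ} (hz : inX z) {n : ℕ}
    (hn : z n < 0) (hzero : ∀ m, n < m → z m = 0) : z ∉ S := fun hzS => by
  obtain ⟨k, hk, hkzero⟩ := (hS.2.2.2 z hz ⟨n, hn.ne⟩ ⟨n, hzero⟩).mp hzS
  rcases lt_trichotomy k n with h | rfl | h
  · have := hkzero n h
    omega
  · omega
  · have := hzero k h
    omega

end IsPositivitySet

namespace Y

instance : PolishSpace Y :=
  IsClosed.polishSpace (s := {x : ℕ → ℤ | ∀ n, x n = -1 ∨ x n = 0 ∨ x n = 1}) <| by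
    simp only [ofPred_forall]
    exact isClosed_iInter fun n =>
      (isClosed_discrete {t : ℤ | t = -1 ∨ t = 0 ∨ t = 1}).preimage
        (continuous_apply n : Continuous fun x : ℕ → ℤ => x n)

instance : Nonempty Y := ⟨⟨0, fun _ => by simp⟩⟩

lemma inX_val (x : Y) : inX x.val := fun n => by
  have := x.2 n
  omega

def cylinder (x : Y) (n : ℕ) : Set Y := Subtype.val ⁻¹' PiNat.cylinder x.val n

lemma self_mem_cylinder (x : Y) (n : ℕ) : x ∈ cylinder x n :=
  PiNat.self_mem_cylinder x.val n

lemma isOpen_cylinder (x : Y) (n : ℕ) : IsOpen (cylinder x n) :=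
  (PiNat.isOpen_cylinder _ x.val n).preimage continuous_subtype_val

lemma exists_cylinder_subset {V : Set Y} (hV : IsOpen V) {y : Y} (hy : y ∈ V) {s : ℤ}
    (hs : s = -1 ∨ s = 0 ∨ s = 1) : ∃ (x : Y) (n : ℕ), x.val n = s ∧ cylinder x (n + 1) ⊆ V := by
  obtain ⟨V₀, hV₀, rfl⟩ := isOpen_induced_iff.mp hV
  obtain ⟨_, ⟨z, n, rfl⟩, hyz, hzV₀⟩ :=
    (isTopologicalBasis_cylinders fun _ => ℤ).exists_subset_of_mem_open hy hV₀
  let x : Y := ⟨Function.update y.val n s, fun i => by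
    rcases eq_or_ne i n with rfl | hi
    · simpa using hs
    · simpa [hi] using y.2 i⟩
  refine ⟨x, n, by simp [x], fun w hw => hzV₀ ?_⟩
  rw [← mem_cylinder_iff_eq.mp hyz, ← iUnion_cylinder_update]
  exact mem_iUnion_of_mem s hw

def negTailFun (L : ℕ) (x : Y) : Y :=
  ⟨fun i => if i < L then x.val i else -x.val i, fun i => by
    have := x.2 i
    dsimp only
    split_ifs <;> omega⟩

lemma negTailFun_involutive (L : ℕ) : Function.Involutive (negTailFun L) := fun x =>
  Subtype.ext <| funext fun i => by
    by_cases hi : i < L <;> simp [negTailFun, hi]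

lemma continuous_negTailFun (L : ℕ) : Continuous (negTailFun L) :=
  have hcoord (i : ℕ) : Continuous fun x : Y => x.val i :=
    (continuous_apply i).comp continuous_subtype_val
  .subtype_mk (continuous_pi fun i => by
    by_cases hi : i < L
    · simpa [hi] using hcoord i
    · simp only [hi, if_false]
      exact (hcoord i).neg) _

def negTail (L : ℕ) : Y ≃ₜ Y :=
  ⟨(negTailFun_involutive L).toPerm, continuous_negTailFun L, continuous_negTailFun L⟩

lemma negTail_apply_val (L : ℕ) (x : Y) (i : ℕ) :
    (negTail L x).val i = if i < L then x.val i else -x.val i := rfl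

lemma negTail_mem_cylinder {x y : Y} {L : ℕ} (hy : y ∈ cylinder x L) :
    negTail L y ∈ cylinder x L := fun i hi => by
  simpa [negTail_apply_val, hi] using hy i hi

lemma val_add_negTail_of_mem_cylinder {x y : Y} {L : ℕ} (hy : y ∈ cylinder x L) :
    y.val + (negTail L y).val = fun i => if i < L then 2 * x.val i else 0 := funext fun i => by
  by_cases hi : i < L
  · simp [negTail_apply_val, hi, hy i hi, two_mul]
  · simp [negTail_apply_val, hi]

lemma inX_doubled_prefix (x : Y) (L : ℕ) : inX fun i => if i < L then 2 * x.val i else 0 :=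
  fun i => by
    have := x.2 i
    dsimp only
    split_ifs <;> omega

variable {S : Set (ℕ → ℤ)}

lemma cylinder_diff_subset_preimage_negTail_of_eq_one (hS : IsPositivitySet S) {x : Y} {n : ℕ}
    (hx : x.val n = 1) :
    cylinder x (n + 1) \ {y | y.val ∈ S} ⊆
      negTail (n + 1) ⁻¹' (cylinder x (n + 1) ∩ {y | y.val ∈ S}) := by
  rintro y ⟨hyC, hyS⟩
  refine ⟨negTail_mem_cylinder hyC, by_contra fun hφyS => ?_⟩
  have hsum := val_add_negTail_of_mem_cylinder hyC
  refine hS.2.2.1 _ _ (inX_val y) (inX_val _) (hsum ▸ inX_doubled_prefix x _) hyS hφyS ?_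
  rw [hsum]
  refine hS.mem_of_lastNonzero_pos (inX_doubled_prefix x _) (n := n) (by simp [hx]) ?_
  intro m hm
  simp [show ¬ m < n + 1 by omega]

lemma cylinder_diff_subset_preimage_negTail_of_eq_neg_one (hS : IsPositivitySet S) {x : Y} {n : ℕ}
    (hx : x.val n = -1) :
    cylinder x (n + 1) \ {y | y.val ∉ S} ⊆
      negTail (n + 1) ⁻¹' (cylinder x (n + 1) ∩ {y | y.val ∉ S}) := by
  rintro y ⟨hyC, hyS⟩
  refine ⟨negTail_mem_cylinder hyC, fun hφyS => ?_⟩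
  have hsum := val_add_negTail_of_mem_cylinder hyC
  have hmem := hS.2.1 _ _ (inX_val y) (inX_val _) (hsum ▸ inX_doubled_prefix x _) (not_not.mp hyS)
    hφyS
  rw [hsum] at hmem
  refine hS.notMem_of_lastNonzero_neg (inX_doubled_prefix x _) (n := n) (by simp [hx]) ?_ hmem
  intro m hm
  simp [show ¬ m < n + 1 by omega]

lemma not_isMeagre_cylinder_inter {T : Set Y} {x : Y} {L : ℕ}
    (hT : cylinder x L \ T ⊆ negTail L ⁻¹' (cylinder x L ∩ T)) :
    ¬ IsMeagre (cylinder x L ∩ T) := fun hm => by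
  refine not_isMeagre_of_isOpen (isOpen_cylinder x L) ⟨x, self_mem_cylinder x L⟩ ?_
  rw [← inter_union_sdiff (cylinder x L) T]
  exact hm.union ((hm.preimage_of_isOpenMap (negTail L).continuous (negTail L).isOpenMap).mono hT)

lemma not_isMeagre_inter (hS : IsPositivitySet S) {V : Set Y} (hV : IsOpen V) (hne : V.Nonempty) :
    ¬ IsMeagre (V ∩ {y | y.val ∈ S}) := fun hm => by
  obtain ⟨y, hy⟩ := hne
  obtain ⟨x, n, hx, hxV⟩ := exists_cylinder_subset hV hy (s := 1) (by norm_num)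
  exact not_isMeagre_cylinder_inter (cylinder_diff_subset_preimage_negTail_of_eq_one hS hx)
    (hm.mono (inter_subset_inter_left _ hxV))

lemma not_isMeagre_diff (hS : IsPositivitySet S) {V : Set Y} (hV : IsOpen V) (hne : V.Nonempty) :
    ¬ IsMeagre (V \ {y | y.val ∈ S}) := fun hm => by
  obtain ⟨y, hy⟩ := hne
  obtain ⟨x, n, hx, hxV⟩ := exists_cylinder_subset hV hy (s := -1) (by norm_num)
  exact not_isMeagre_cylinder_inter (cylinder_diff_subset_preimage_negTail_of_eq_neg_one hS hx)
    (hm.mono fun y hy => mem_sdiff_of_mem (hxV hy.1) hy.2)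

end Y

/-- If `S ⊆ {-2,-1,0,1,2}^ℕ` is a positivity set, then `S' = S ∩ {-1,0,1}^ℕ` does not
have the Baire property in the Cantor space `{-1,0,1}^ℕ`. -/
theorem positivity_set_restriction_not_baire (S : Set (ℕ → ℤ)) (hS : IsPositivitySet S) :
    ¬ ∃ U : Set Y, IsOpen U ∧ IsMeagre (symmDiff {y : Y | y.val ∈ S} U) := by
  rintro ⟨U, hU, hM⟩
  rcases U.eq_empty_or_nonempty with rfl | hUne
  · exact Y.not_isMeagre_inter hS isOpen_univ univ_nonempty
      (by simpa [symmDiff_def] using hM)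
  · exact Y.not_isMeagre_diff hS hU hUne (hM.mono (by rw [symmDiff_def]; exact subset_union_right))
end

section
/- Let V be a linearly ordered field extending ℝ with a positive infinite element θ (i.e., θ > n for all n ∈ ℕ). Let ρ : {-2,-1,0,1,2}^ℕ → (ℝ → ℝ) send ξ to the entire function x ↦ Σ_{n≥0} ξ_n x^n / n!, and suppose L is a linear functional from the ℝ-span of the image of ρ to V such that for every real polynomial P in this span, L(P) = P(θ). Then S = {ξ : L(ρ(ξ)) > 0} is a positivity set in {-2,-1,0,1,2}^ℕ. -/
/-- `ρ` sends `ξ` to the entire function `x ↦ Σ_{n≥0} ξ_n x^n / n!` (restricted to ℝ). -/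
noncomputable def rho (ξ : ℕ → ℤ) : ℝ → ℝ :=
  fun x => ∑' n : ℕ, (ξ n : ℝ) * x ^ n / (n.factorial : ℝ)

open Polynomial

theorem map_lt_of_forall_natCast_lt {V : Type*} [Semiring V] [PartialOrder V] {i : ℝ →+* V}
    (hi : StrictMono i) {θ : V} (hθ : ∀ n : ℕ, (n : V) < θ) (r : ℝ) : i r < θ := by
  obtain ⟨n, hn⟩ := exists_nat_gt r
  exact (hi hn).trans_eq (map_natCast i n) |>.trans (hθ n)

namespace Polynomial

theorem leadingCoeff_divX {R : Type*} [Semiring R] {P : R[X]} (hdeg : 0 < P.natDegree) :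
    P.divX.leadingCoeff = P.leadingCoeff := by
  rw [leadingCoeff, natDegree_divX_eq_natDegree_tsub_one, coeff_divX, Nat.sub_add_cancel hdeg,
    leadingCoeff]

theorem eval₂_eq_eval₂_divX_mul_add {R S : Type*} [Semiring R] [CommSemiring S] (f : R →+* S)
    (x : S) (P : R[X]) : P.eval₂ f x = P.divX.eval₂ f x * x + f (P.coeff 0) := by
  conv_lhs => rw [← divX_mul_X_add P]
  rw [eval₂_add, eval₂_mul, eval₂_X, eval₂_C]

variable {V : Type*} [CommRing V] [LinearOrder V] [IsStrictOrderedRing V] {i : ℝ →+* V} {θ : V}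

theorem lt_eval₂_of_natDegree_pos (hi : StrictMono i) (hθ : ∀ r, i r < θ) {P : ℝ[X]}
    (hdeg : 0 < P.natDegree) (hlc : 0 < P.leadingCoeff) (r : ℝ) : i r < P.eval₂ i θ := by
  obtain ⟨n, hn⟩ : ∃ n, P.natDegree = n + 1 := ⟨_, (Nat.succ_pred_eq_of_pos hdeg).symm⟩
  induction n generalizing P r with
  | zero =>
    set a := P.leadingCoeff
    have hdivX : P.divX = C a := by
      have hdivX_deg : P.divX.natDegree = 0 := by
        simp [natDegree_divX_eq_natDegree_tsub_one, hn]
      rw [eq_C_of_natDegree_eq_zero hdivX_deg, coeff_divX, ← zero_add 1, ← hn]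
      rfl
    have hia : 0 < i a := by simpa using hi hlc
    have key : i a * i ((r - P.coeff 0) / a) < i a * θ := mul_lt_mul_of_pos_left (hθ _) hia
    rw [← map_mul, mul_div_cancel₀ _ hlc.ne', map_sub] at key
    rw [eval₂_eq_eval₂_divX_mul_add, hdivX, eval₂_C]
    linarith
  | succ n ih =>
    have hdivX_deg : P.divX.natDegree = n + 1 := by
      simp [natDegree_divX_eq_natDegree_tsub_one, hn]
    have hdivX := ih (by omega) (leadingCoeff_divX hdeg ▸ hlc) (r := 1) hdivX_deg
    have hθ_pos : 0 < θ := by simpa using hθ 0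
    have hθr : i r - i (P.coeff 0) < θ := by simpa using hθ (r - P.coeff 0)
    rw [map_one] at hdivX
    rw [eval₂_eq_eval₂_divX_mul_add]
    nlinarith

theorem eval₂_pos_of_leadingCoeff_pos (hi : StrictMono i) (hθ : ∀ r, i r < θ) {P : ℝ[X]}
    (hlc : 0 < P.leadingCoeff) : 0 < P.eval₂ i θ := by
  rcases P.natDegree.eq_zero_or_pos with hdeg | hdeg
  · rw [leadingCoeff, hdeg] at hlc
    rw [eq_C_of_natDegree_eq_zero hdeg, eval₂_C]
    simpa using hi hlc
  · simpa using lt_eval₂_of_natDegree_pos hi hθ hdeg hlc 0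

theorem eval₂_pos_iff_leadingCoeff_pos (hi : StrictMono i) (hθ : ∀ r, i r < θ) {P : ℝ[X]}
    (hP : P ≠ 0) : 0 < P.eval₂ i θ ↔ 0 < P.leadingCoeff := by
  refine ⟨fun hpos => ?_, eval₂_pos_of_leadingCoeff_pos hi hθ⟩
  by_contra! hlc
  have hneg : 0 < (-P).leadingCoeff := by
    rw [leadingCoeff_neg]
    exact neg_pos.2 (hlc.lt_of_ne (leadingCoeff_ne_zero.2 hP))
  have := eval₂_pos_of_leadingCoeff_pos hi hθ hneg
  rw [eval₂_neg] at this
  linarith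

end Polynomial

theorem inX.abs_cast_le_two {x : ℕ → ℤ} (hx : inX x) (n : ℕ) : |(x n : ℝ)| ≤ 2 := by
  rcases hx n with h | h | h | h | h <;> norm_num [h]

theorem inX.summable_rho {x : ℕ → ℤ} (hx : inX x) (t : ℝ) :
    Summable fun n => (x n : ℝ) * t ^ n / n.factorial := by
  refine .of_norm_bounded ((Real.summable_pow_div_factorial |t|).mul_left 2) fun n => ?_
  rw [norm_div, norm_mul, norm_pow, Real.norm_eq_abs, Real.norm_eq_abs, Real.norm_natCast,
    mul_div_assoc]
  exact mul_le_mul_of_nonneg_right (hx.abs_cast_le_two n) (by positivity)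

theorem rho_add {x y : ℕ → ℤ} (hx : inX x) (hy : inX y) : rho (x + y) = rho x + rho y := by
  funext t
  rw [Pi.add_apply, rho, rho, rho, ← (hx.summable_rho t).tsum_add (hy.summable_rho t)]
  congr 1 with n
  rw [Pi.add_apply, Int.cast_add]
  ring

theorem EventuallyZeroSeq.exists_last_ne_zero {x : ℕ → ℤ} (hev : EventuallyZeroSeq x)
    (hne : ∃ n, x n ≠ 0) : ∃ d, x d ≠ 0 ∧ ∀ m, d < m → x m = 0 := by
  obtain ⟨N, hN⟩ := hev
  obtain ⟨n, hn⟩ := hne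
  have hnN : n ≤ N := by
    by_contra! h
    exact hn (hN n h)
  refine ⟨Nat.findGreatest (x · ≠ 0) N, Nat.findGreatest_spec (P := (x · ≠ 0)) hnN hn,
    fun m hm => ?_⟩
  by_cases hmN : m ≤ N
  · simpa using Nat.findGreatest_is_greatest hm hmN
  · exact hN m (not_le.1 hmN)

theorem lastNonzeroPos_iff {x : ℕ → ℤ} {d : ℕ} (hd : x d ≠ 0) (hz : ∀ m, d < m → x m = 0) :
    LastNonzeroPos x ↔ 0 < x d := by
  refine ⟨fun ⟨n, hn, hzn⟩ => ?_, fun h => ⟨d, h, hz⟩⟩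
  rcases lt_trichotomy n d with h | rfl | h
  · exact absurd (hzn d h) hd
  · exact hn
  · exact absurd (hz n h) hn.ne'

noncomputable def rhoTrunc (x : ℕ → ℤ) (d : ℕ) : ℝ[X] :=
  ∑ n ∈ Finset.range (d + 1), monomial n ((x n : ℝ) / n.factorial)

theorem rho_eq_eval_rhoTrunc {x : ℕ → ℤ} {d : ℕ} (hz : ∀ m, d < m → x m = 0) :
    rho x = fun t => (rhoTrunc x d).eval t := by
  funext t
  rw [rho, rhoTrunc, eval_finsetSum, tsum_eq_sum fun n hn => ?_]
  · refine Finset.sum_congr rfl fun n _ => ?_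
    rw [eval_monomial]
    ring
  · rw [hz n (by simpa using hn)]
    simp

theorem coeff_rhoTrunc (x : ℕ → ℤ) (d n : ℕ) :
    (rhoTrunc x d).coeff n = if n ≤ d then (x n : ℝ) / n.factorial else 0 := by
  simp [rhoTrunc, coeff_monomial]

theorem leadingCoeff_rhoTrunc {x : ℕ → ℤ} {d : ℕ} (hd : x d ≠ 0) :
    (rhoTrunc x d).leadingCoeff = (x d : ℝ) / d.factorial := by
  have hcoeff : (rhoTrunc x d).coeff d = (x d : ℝ) / d.factorial := by simp [coeff_rhoTrunc]
  have hdeg : (rhoTrunc x d).natDegree = d := by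
    refine natDegree_eq_of_le_of_coeff_ne_zero ?_ (by simp [hcoeff, hd, Nat.factorial_ne_zero])
    exact natDegree_le_iff_coeff_eq_zero.2 fun n hn => by simp [coeff_rhoTrunc, not_le.2 hn]
  rw [leadingCoeff, hdeg, hcoeff]

theorem positivity_set_from_functional_general {V : Type*} [Field V] [LinearOrder V] [IsStrictOrderedRing V]
    (i : ℝ →+* V) (hi : StrictMono i) (θ : V) (hθ : ∀ n : ℕ, (n : V) < θ)
    (L : (ℝ → ℝ) → V)
    (hadd : ∀ f g : ℝ → ℝ, f ∈ Submodule.span ℝ (rho '' {x | inX x}) →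
      g ∈ Submodule.span ℝ (rho '' {x | inX x}) → L (f + g) = L f + L g)
    (hpoly : ∀ P : Polynomial ℝ,
      (fun x => Polynomial.eval x P) ∈ Submodule.span ℝ (rho '' {x | inX x}) →
      L (fun x => Polynomial.eval x P) = Polynomial.eval₂ i θ P) :
    IsPositivitySet {ξ | inX ξ ∧ 0 < L (rho ξ)} := by
  have rho_mem {x} (hx : inX x) : rho x ∈ Submodule.span ℝ (rho '' {x | inX x}) :=
    Submodule.subset_span ⟨x, hx, rfl⟩
  have L_rho_add {x y} (hx : inX x) (hy : inX y) : L (rho (x + y)) = L (rho x) + L (rho y) := by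
    rw [rho_add hx hy]
    exact hadd _ _ (rho_mem hx) (rho_mem hy)
  refine ⟨fun ξ hξ => hξ.1, ?_, ?_, ?_⟩
  · rintro x y hx hy hxy ⟨-, hxS⟩ ⟨-, hyS⟩
    exact ⟨hxy, L_rho_add hx hy ▸ add_pos hxS hyS⟩
  · rintro x y hx hy hxy hxS hyS ⟨-, hpos⟩
    simp only [Set.mem_ofPred_eq, hx, hy, true_and, not_lt] at hxS hyS
    rw [L_rho_add hx hy] at hpos
    linarith
  · intro ξ hξ hne hev
    obtain ⟨d, hd, hz⟩ := hev.exists_last_ne_zero hne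
    have hL : L (rho ξ) = (rhoTrunc ξ d).eval₂ i θ := by
      have hmem := rho_mem hξ
      rw [rho_eq_eval_rhoTrunc hz] at hmem ⊢
      exact hpoly _ hmem
    have hP : rhoTrunc ξ d ≠ 0 := by
      rw [← leadingCoeff_ne_zero, leadingCoeff_rhoTrunc hd]
      positivity
    rw [lastNonzeroPos_iff hd hz, Set.mem_ofPred_eq, hL,
      eval₂_pos_iff_leadingCoeff_pos hi (map_lt_of_forall_natCast_lt hi hθ) hP,
      leadingCoeff_rhoTrunc hd, div_pos_iff_of_pos_right (by positivity), Int.cast_pos]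
    exact and_iff_right hξ

/-- If `V` is an ordered field extending `ℝ`, `θ ∈ V` is positive infinite, and `L` is a
linear functional on the ℝ-span of the image of `ρ` with `L(P) = P(θ)` for polynomials `P`
in the span, then `S = {ξ : L(ρ(ξ)) > 0}` is a positivity set. -/
theorem positivity_set_from_functional {V : Type*} [Field V] [LinearOrder V] [IsStrictOrderedRing V]
    (i : ℝ →+* V) (hi : StrictMono i) (θ : V) (hθ : ∀ n : ℕ, (n : V) < θ)
    (L : (ℝ → ℝ) → V)
    (hadd : ∀ f g : ℝ → ℝ, f ∈ Submodule.span ℝ (rho '' {x | inX x}) →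
      g ∈ Submodule.span ℝ (rho '' {x | inX x}) → L (f + g) = L f + L g)
    (hsmul : ∀ (c : ℝ) (f : ℝ → ℝ), f ∈ Submodule.span ℝ (rho '' {x | inX x}) →
      L (c • f) = i c * L f)
    (hpoly : ∀ P : Polynomial ℝ,
      (fun x => Polynomial.eval x P) ∈ Submodule.span ℝ (rho '' {x | inX x}) →
      L (fun x => Polynomial.eval x P) = Polynomial.eval₂ i θ P) :
    IsPositivitySet {ξ | inX ξ ∧ 0 < L (rho ξ)} :=
  positivity_set_from_functional_general i hi θ hθ L hadd hpoly
end

section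
/- Let T ∈ ℓ^∞ → ℓ^∞ be the shift (Ts)_n = s_{n+1}, and let l_s, L_s be as above. Then for all x ≥ 0, |L_{Ts}(x) - L_s(x)| ≤ 2‖s‖_∞. -/
noncomputable def linInterp (s : ℕ → ℝ) (x : ℝ) : ℝ :=
  if x ≤ 0 then 0
  else if x ≤ 1 then x * s 0
  else s (⌊x⌋₊ - 1) + (x - (⌊x⌋₊ : ℝ)) * (s ⌊x⌋₊ - s (⌊x⌋₊ - 1))

/-! For `t ≥ 1` the interpolant of the shifted sequence is a unit translate, `l_{Ts}(t) = l_s(t + 1)`,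
so for `x ≥ 1` the difference telescopes to `∫ₓ^{x+1} l_s − s₀`, and both terms are at most
`‖s‖_∞` in size. For `x ≤ 1` both interpolants are linear and the difference is
`x² (s₁ − s₀) / 2`. -/

open MeasureTheory Set intervalIntegral

lemma exists_mem_Icc_natCast_add_one {t : ℝ} (ht : 1 ≤ t) :
    ∃ n : ℕ, t ∈ Icc ((n : ℝ) + 1) (n + 2) := by
  refine ⟨⌊t⌋₊ - 1, ?_⟩
  have hn : ((⌊t⌋₊ - 1 : ℕ) : ℝ) + 1 = ⌊t⌋₊ := by
    exact_mod_cast Nat.sub_add_cancel (Nat.le_floor (by exact_mod_cast ht))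
  exact ⟨hn ▸ Nat.floor_le (by linarith), by linarith [Nat.lt_floor_add_one t]⟩

section LinInterp

variable (s : ℕ → ℝ)

lemma linInterp_of_nonpos {t : ℝ} (ht : t ≤ 0) : linInterp s t = 0 := by
  simp [linInterp, ht]

lemma linInterp_of_mem_Icc_zero_one {t : ℝ} (ht : t ∈ Icc (0 : ℝ) 1) :
    linInterp s t = t * s 0 := by
  rcases ht.1.eq_or_lt with rfl | h0
  · simp [linInterp]
  · simp [linInterp, h0.not_ge, ht.2]

lemma linInterp_of_mem_Icc (n : ℕ) {t : ℝ} (ht : t ∈ Icc ((n : ℝ) + 1) (n + 2)) :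
    linInterp s t = s n + (t - (n + 1)) * (s (n + 1) - s n) := by
  obtain ⟨h1, h2⟩ := ht
  by_cases ht1 : t ≤ 1
  · obtain rfl : n = 0 := by
      exact_mod_cast (by linarith : (n : ℝ) ≤ 0).antisymm n.cast_nonneg
    obtain rfl : t = 1 := by push_cast at h1; linarith
    simp [linInterp]
  have ht0 : ¬ t ≤ 0 := by linarith
  rcases h2.eq_or_lt with rfl | h2
  · have hfl : ⌊(n : ℝ) + 2⌋₊ = n + 2 := by exact_mod_cast Nat.floor_natCast (n + 2)
    simp only [linInterp, ht0, ht1, if_false, hfl]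
    push_cast
    ring_nf
  · have hfl : ⌊t⌋₊ = n + 1 := by
      rw [Nat.floor_eq_iff (by linarith)]
      push_cast
      constructor <;> linarith
    simp only [linInterp, ht0, ht1, if_false, hfl, Nat.add_sub_cancel]
    push_cast
    ring

lemma linInterp_shift_of_one_le {t : ℝ} (ht : 1 ≤ t) :
    linInterp (fun n => s (n + 1)) t = linInterp s (t + 1) := by
  obtain ⟨n, hn⟩ := exists_mem_Icc_natCast_add_one ht
  have hn' : t + 1 ∈ Icc ((↑(n + 1) : ℝ) + 1) (↑(n + 1) + 2) := by
    push_cast; constructor <;> linarith [hn.1, hn.2]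
  rw [linInterp_of_mem_Icc _ n hn, linInterp_of_mem_Icc s (n + 1) hn']
  push_cast
  ring

lemma abs_linInterp_le {M : ℝ} (hs : ∀ n, |s n| ≤ M) (t : ℝ) : |linInterp s t| ≤ M := by
  have hM : 0 ≤ M := (abs_nonneg _).trans (hs 0)
  rcases le_total t 0 with ht0 | ht0
  · simpa [linInterp_of_nonpos s ht0] using hM
  rcases le_total t 1 with ht1 | ht1
  · rw [linInterp_of_mem_Icc_zero_one s ⟨ht0, ht1⟩, abs_mul, abs_of_nonneg ht0]
    nlinarith [hs 0, abs_nonneg (s 0)]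
  · obtain ⟨n, hn⟩ := exists_mem_Icc_natCast_add_one ht1
    rw [linInterp_of_mem_Icc s n hn]
    obtain ⟨ha, ha'⟩ := abs_le.1 (hs n)
    obtain ⟨hb, hb'⟩ := abs_le.1 (hs (n + 1))
    -- a convex combination of `s n` and `s (n + 1)`
    have hθ : 0 ≤ t - (n + 1) ∧ t - (n + 1) ≤ 1 := ⟨by linarith [hn.1], by linarith [hn.2]⟩
    exact abs_le.2 ⟨by nlinarith, by nlinarith⟩

lemma measurable_linInterp : Measurable (linInterp s) := by
  have hfloor : ∀ f : ℕ → ℝ, Measurable fun x : ℝ => f ⌊x⌋₊ :=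
    fun f => measurable_from_nat.comp Nat.measurable_floor
  have := hfloor s
  have := hfloor (fun n => s (n - 1))
  have := hfloor Nat.cast
  exact Measurable.ite measurableSet_Iic measurable_const
    (Measurable.ite measurableSet_Iic (by fun_prop) (by fun_prop))

lemma intervalIntegrable_linInterp {M : ℝ} (hs : ∀ n, |s n| ≤ M) (a b : ℝ) :
    IntervalIntegrable (linInterp s) volume a b :=
  intervalIntegrable_const.mono_fun' (measurable_linInterp s).aestronglyMeasurable
    (ae_of_all _ (abs_linInterp_le s hs))

lemma integral_zero_linInterp_of_le_one {x : ℝ} (hx₀ : 0 ≤ x) (hx₁ : x ≤ 1) :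
    ∫ t in (0 : ℝ)..x, linInterp s t = x ^ 2 / 2 * s 0 := by
  rw [integral_congr (g := fun t => t * s 0) fun t ht => by
      rw [uIcc_of_le hx₀] at ht
      exact linInterp_of_mem_Icc_zero_one s ⟨ht.1, ht.2.trans hx₁⟩,
    intervalIntegral.integral_mul_const, integral_id]
  ring

lemma integral_one_two_linInterp :
    ∫ t in (1 : ℝ)..2, linInterp s t = (s 0 + s 1) / 2 := by
  rw [integral_congr (g := fun t => s 0 + (t - 1) * (s 1 - s 0)) fun t ht => by
      rw [uIcc_of_le one_le_two] at ht
      simpa using linInterp_of_mem_Icc s 0 (by norm_num; exact ht)]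
  rw [intervalIntegral.integral_add intervalIntegrable_const
    ((by fun_prop : Continuous fun t : ℝ => (t - 1) * (s 1 - s 0)).intervalIntegrable _ _),
    intervalIntegral.integral_mul_const, integral_comp_sub_right (fun t => t)]
  norm_num
  ring

lemma integral_linInterp_shift_sub {M : ℝ} (hs : ∀ n, |s n| ≤ M) {x : ℝ} (hx : 1 ≤ x) :
    (∫ t in (0 : ℝ)..x, linInterp (fun n => s (n + 1)) t) - ∫ t in (0 : ℝ)..x, linInterp s t =
      (∫ t in x..x + 1, linInterp s t) - s 0 := by
  have hI := intervalIntegrable_linInterp s hs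
  have hIshift := intervalIntegrable_linInterp _ fun n => hs (n + 1)
  have hshift : ∫ t in (1 : ℝ)..x, linInterp (fun n => s (n + 1)) t =
      ∫ t in (2 : ℝ)..x + 1, linInterp s t := by
    rw [integral_congr (g := fun t => linInterp s (t + 1)) fun t ht =>
        linInterp_shift_of_one_le s (uIcc_of_le hx ▸ ht).1,
      integral_comp_add_right]
    norm_num
  have hsplit : (∫ t in (0 : ℝ)..x, linInterp s t) + ∫ t in x..x + 1, linInterp s t =
      (∫ t in (0 : ℝ)..1, linInterp s t) + (∫ t in (1 : ℝ)..2, linInterp s t) +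
        ∫ t in (2 : ℝ)..x + 1, linInterp s t := by
    simp only [integral_add_adjacent_intervals (hI _ _) (hI _ _)]
  have h01 : ∫ t in (0 : ℝ)..1, linInterp s t = s 0 / 2 := by
    rw [integral_zero_linInterp_of_le_one s zero_le_one le_rfl]; ring
  have h01shift : ∫ t in (0 : ℝ)..1, linInterp (fun n => s (n + 1)) t = s 1 / 2 := by
    rw [integral_zero_linInterp_of_le_one _ zero_le_one le_rfl]; ring
  rw [← integral_add_adjacent_intervals (hIshift 0 1) (hIshift 1 x), hshift, h01shift]
  linarith [integral_one_two_linInterp s]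

end LinInterp

/-- With `T` the shift `(Ts)_n = s_{n+1}` and `L_s(x) = ∫₀ˣ l_s`, for all `x ≥ 0`,
`|L_{Ts}(x) − L_s(x)| ≤ 2‖s‖_∞`. -/
theorem integral_linInterp_shift (s : ℕ → ℝ) (M : ℝ) (hM : ∀ n, |s n| ≤ M)
    (x : ℝ) (hx : 0 ≤ x) :
    |(∫ t in (0:ℝ)..x, linInterp (fun n => s (n + 1)) t) -
      ∫ t in (0:ℝ)..x, linInterp s t| ≤ 2 * M := by
  rcases le_total x 1 with hx₁ | hx₁
  · rw [integral_zero_linInterp_of_le_one _ hx hx₁, integral_zero_linInterp_of_le_one _ hx hx₁,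
      ← mul_sub, abs_mul, abs_of_nonneg (by positivity)]
    have hx2 : x ^ 2 / 2 ≤ 1 / 2 := by nlinarith
    calc x ^ 2 / 2 * |s 1 - s 0| ≤ 1 / 2 * (M + M) :=
          mul_le_mul hx2 ((abs_sub _ _).trans (add_le_add (hM 1) (hM 0))) (abs_nonneg _)
            (by norm_num)
      _ ≤ 2 * M := by linarith [(abs_nonneg _).trans (hM 0)]
  · rw [integral_linInterp_shift_sub s hM hx₁]
    have hmean : ‖∫ t in x..x + 1, linInterp s t‖ ≤ M * |x + 1 - x| :=
      norm_integral_le_of_norm_le_const fun t _ => abs_linInterp_le s hM t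
    calc |(∫ t in x..x + 1, linInterp s t) - s 0|
        ≤ |∫ t in x..x + 1, linInterp s t| + |s 0| := abs_sub _ _
      _ ≤ M + M := add_le_add (by simpa using hmean) (hM 0)
      _ = 2 * M := by ring
end

section
/- For each n ∈ ℤ⁺ let f_n(z) = n e^{-z}(1 - e^{-z/n}). Then f_n is entire, ‖f_n‖ < 2 in the norm ‖f‖ = sup_{z∈ℂ}|e^{-2|z|}f(z)| + sup_{x∈ℝ⁺}|e^{x/2}f(x)|, and ‖n^{-1} f_n‖ → 0 as n → ∞. -/
/-!
On `ℂ`, `‖exp (-z)‖ ≤ exp ‖z‖` and, by Bernoulli's inequality applied to `exp (‖z‖ / n)`,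
`n ‖1 - exp (-z / n)‖ ≤ n (exp (‖z‖ / n) - 1) ≤ exp ‖z‖ - 1`; hence
`exp (-2‖z‖) ‖f_n z‖ ≤ 1 - exp (-‖z‖) ≤ 1`. On `ℝ⁺`, `0 ≤ n (1 - exp (-x / n)) ≤ x` gives
`exp (x / 2) f_n x ≤ x exp (-x / 2) ≤ 2 / e < 1`. Dividing both bounds by `n` gives
`‖n⁻¹ f_n‖ ≤ (1 + 2 / e) / n`.
-/

noncomputable def e1Norm (f : ℂ → ℂ) : ℝ :=
  sSup (Set.range fun z : ℂ => Real.exp (-2 * ‖z‖) * ‖f z‖) +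
  sSup (Set.range fun x : {x : ℝ // 0 < x} => Real.exp (x.1 / 2) * ‖f x.1‖)

def MemE1 (f : ℂ → ℂ) : Prop :=
  Differentiable ℂ f ∧ (∀ x : ℝ, (f x).im = 0) ∧
  BddAbove (Set.range fun z : ℂ => Real.exp (-2 * ‖z‖) * ‖f z‖) ∧
  BddAbove (Set.range fun x : {x : ℝ // 0 < x} => Real.exp (x.1 / 2) * ‖f x.1‖)

open Filter

lemma mul_exp_neg_le_exp_neg_one (y : ℝ) : y * Real.exp (-y) ≤ Real.exp (-1) :=
  calc y * Real.exp (-y) ≤ Real.exp (y - 1) * Real.exp (-y) := by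
        gcongr; linarith [Real.add_one_le_exp (y - 1)]
    _ = Real.exp (-1) := by rw [← Real.exp_add]; ring_nf

lemma two_mul_exp_neg_one_lt_one : 2 * Real.exp (-1) < 1 := by
  rw [Real.exp_neg, ← div_eq_mul_inv, div_lt_one (Real.exp_pos 1)]
  linarith [Real.exp_one_gt_d9]

lemma natCast_mul_exp_div_sub_one_le (n : ℕ) {t : ℝ} (ht : 0 ≤ t) :
    n * (Real.exp (t / n) - 1) ≤ Real.exp t - 1 := by
  rcases Nat.eq_zero_or_pos n with rfl | hn
  · simpa using Real.one_le_exp ht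
  · have hle : -2 ≤ Real.exp (t / n) - 1 := by linarith [Real.exp_pos (t / n)]
    have := one_add_mul_le_pow hle n
    rw [add_sub_cancel, ← Real.exp_nat_mul, mul_div_cancel₀ _ (by positivity)] at this
    linarith

lemma mul_one_sub_exp_neg_div_le {a : ℝ} (ha : 0 < a) (x : ℝ) :
    a * (1 - Real.exp (-x / a)) ≤ x :=
  calc a * (1 - Real.exp (-x / a)) ≤ a * (x / a) := by
        gcongr; linarith [Real.add_one_le_exp (-x / a), neg_div a x]
    _ = x := mul_div_cancel₀ x ha.ne'

lemma e1Norm_nonneg (f : ℂ → ℂ) : 0 ≤ e1Norm f :=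
  add_nonneg (Real.sSup_nonneg <| Set.forall_mem_range.2 fun _ => by positivity)
    (Real.sSup_nonneg <| Set.forall_mem_range.2 fun _ => by positivity)

lemma e1Norm_le {f : ℂ → ℂ} {A B : ℝ} (hA : ∀ z : ℂ, Real.exp (-2 * ‖z‖) * ‖f z‖ ≤ A)
    (hB : ∀ x : ℝ, 0 < x → Real.exp (x / 2) * ‖f x‖ ≤ B) : e1Norm f ≤ A + B :=
  add_le_add (csSup_le (Set.range_nonempty _) (Set.forall_mem_range.2 hA))
    (csSup_le (Set.range_nonempty _) (Set.forall_mem_range.2 fun x => hB x.1 x.2))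

noncomputable def fn (n : ℕ) (z : ℂ) : ℂ :=
  (n : ℂ) * Complex.exp (-z) * (1 - Complex.exp (-z / (n : ℂ)))

lemma fn_ofReal (n : ℕ) (x : ℝ) :
    fn n x = ((n * Real.exp (-x) * (1 - Real.exp (-x / n)) : ℝ) : ℂ) := by
  push_cast [fn, Complex.ofReal_exp]
  ring

lemma differentiable_fn (n : ℕ) : Differentiable ℂ (fn n) := by
  unfold fn
  fun_prop

lemma norm_fn (n : ℕ) (z : ℂ) :
    ‖fn n z‖ = n * ‖Complex.exp (-z) * (1 - Complex.exp (-z / (n : ℂ)))‖ := by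
  simp [fn, mul_assoc]

lemma norm_fn_le (n : ℕ) (z : ℂ) :
    ‖fn n z‖ ≤ Real.exp ‖z‖ * (Real.exp ‖z‖ - 1) := by
  have hexp : ‖Complex.exp (-z)‖ ≤ Real.exp ‖z‖ := by
    simpa using Complex.norm_exp_le_exp_norm (-z)
  have hgap : n * ‖1 - Complex.exp (-z / (n : ℂ))‖ ≤ Real.exp ‖z‖ - 1 := by
    have := Complex.norm_exp_sub_sum_le_exp_norm_sub_sum (-z / n) 1
    simp only [Finset.range_one, Finset.sum_singleton, pow_zero, Nat.factorial_zero,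
      Nat.cast_one, div_one, norm_div, norm_neg, Complex.norm_natCast] at this
    rw [norm_sub_rev]
    exact (mul_le_mul_of_nonneg_left this n.cast_nonneg).trans
      (natCast_mul_exp_div_sub_one_le n (norm_nonneg z))
  rw [fn, norm_mul, norm_mul, Complex.norm_natCast, mul_comm (n : ℝ), mul_assoc]
  gcongr

lemma exp_neg_two_mul_norm_mul_norm_fn_le_one (n : ℕ) (z : ℂ) :
    Real.exp (-2 * ‖z‖) * ‖fn n z‖ ≤ 1 :=
  calc Real.exp (-2 * ‖z‖) * ‖fn n z‖
      ≤ Real.exp (-2 * ‖z‖) * (Real.exp ‖z‖ * (Real.exp ‖z‖ - 1)) := by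
        gcongr; exact norm_fn_le n z
    _ = 1 - Real.exp (-‖z‖) := by
        simp only [mul_sub, mul_one, ← Real.exp_add]
        ring_nf; simp
    _ ≤ 1 := by linarith [Real.exp_pos (-‖z‖)]

lemma exp_half_mul_norm_fn_le {n : ℕ} (hn : 0 < n) {x : ℝ} (hx : 0 ≤ x) :
    Real.exp (x / 2) * ‖fn n x‖ ≤ 2 * Real.exp (-1) := by
  have hn' : (0 : ℝ) < n := Nat.cast_pos.2 hn
  have hgap : 0 ≤ 1 - Real.exp (-x / n) := by
    rw [sub_nonneg, Real.exp_le_one_iff, neg_div, neg_nonpos]; positivity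
  rw [fn_ofReal, Complex.norm_real, Real.norm_eq_abs, abs_of_nonneg (by positivity)]
  calc Real.exp (x / 2) * (n * Real.exp (-x) * (1 - Real.exp (-x / n)))
      = n * (1 - Real.exp (-x / n)) * Real.exp (-(x / 2)) := by
        rw [show -(x / 2) = x / 2 + -x by ring, Real.exp_add]; ring
    _ ≤ x * Real.exp (-(x / 2)) := by gcongr; exact mul_one_sub_exp_neg_div_le hn' x
    _ = 2 * (x / 2 * Real.exp (-(x / 2))) := by ring
    _ ≤ 2 * Real.exp (-1) := by gcongr; exact mul_exp_neg_le_exp_neg_one _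

lemma e1Norm_fn_le {n : ℕ} (hn : 0 < n) : e1Norm (fn n) ≤ 1 + 2 * Real.exp (-1) :=
  e1Norm_le (exp_neg_two_mul_norm_mul_norm_fn_le_one n) fun _ hx =>
    exp_half_mul_norm_fn_le hn hx.le

lemma e1Norm_fn_div_le {n : ℕ} (hn : 0 < n) :
    e1Norm (fun z : ℂ => Complex.exp (-z) * (1 - Complex.exp (-z / (n : ℂ)))) ≤
      (1 + 2 * Real.exp (-1)) / n := by
  have hn' : (0 : ℝ) < n := Nat.cast_pos.2 hn
  rw [add_div]
  refine e1Norm_le (fun z => ?_) (fun x hx => ?_)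
  · rw [le_div_iff₀' hn', ← mul_assoc, mul_comm (n : ℝ), mul_assoc, ← norm_fn]
    exact exp_neg_two_mul_norm_mul_norm_fn_le_one n z
  · rw [le_div_iff₀' hn', ← mul_assoc, mul_comm (n : ℝ), mul_assoc, ← norm_fn]
    exact exp_half_mul_norm_fn_le hn hx.le

/-- `f_n(z) = n e^{-z}(1 - e^{-z/n})` is entire with `‖f_n‖ < 2`, and `‖n⁻¹ f_n‖ → 0`. -/
theorem fn_properties :
    (∀ n : ℕ, 1 ≤ n →
      MemE1 (fun z : ℂ => (n : ℂ) * Complex.exp (-z) * (1 - Complex.exp (-z / (n : ℂ)))) ∧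
      e1Norm (fun z : ℂ => (n : ℂ) * Complex.exp (-z) * (1 - Complex.exp (-z / (n : ℂ)))) < 2) ∧
    Filter.Tendsto
      (fun n : ℕ => e1Norm (fun z : ℂ => Complex.exp (-z) * (1 - Complex.exp (-z / (n : ℂ)))))
      Filter.atTop (nhds 0) := by
  refine ⟨fun n hn => ?_, ?_⟩
  · change MemE1 (fn n) ∧ e1Norm (fn n) < 2
    refine ⟨⟨differentiable_fn n, fun x => by rw [fn_ofReal, Complex.ofReal_im], ?_, ?_⟩, ?_⟩
    · exact ⟨1, Set.forall_mem_range.2 (exp_neg_two_mul_norm_mul_norm_fn_le_one n)⟩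
    · exact ⟨_, Set.forall_mem_range.2 fun x => exp_half_mul_norm_fn_le hn x.2.le⟩
    · linarith [e1Norm_fn_le hn, two_mul_exp_neg_one_lt_one]
  · refine tendsto_of_tendsto_of_tendsto_of_le_of_le' tendsto_const_nhds
      (tendsto_const_div_atTop_nhds_zero_nat (1 + 2 * Real.exp (-1)))
      (Eventually.of_forall fun n => e1Norm_nonneg _) ?_
    filter_upwards [eventually_gt_atTop 0] with n hn using e1Norm_fn_div_le hn
end
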